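/- Let p be a prime and q = p^h. Two additive MDS codes of length n over F_q are equivalent if and only if they are additively equivalent. -/
import Mathlib




/-- Two codes `A, B ⊆ F^n` are *equivalent* if there exist a permutation `α` of the
coordinate positions and permutations `σ i` of the alphabet `F` such that the map
`u ↦ (i ↦ σ i (u (α i)))` sends `A` onto `B`. -/
def CodeEquiv (F : Type*) (n : ℕ) (A B : Set (Fin n → F)) : Prop :=
  ∃ (α : Equiv.Perm (Fin n)) (σ : Fin n → Equiv.Perm F),
    (fun u : Fin n → F => fun i => σ i (u (α i))) '' A = B

/-- Two codes `A, B ⊆ F^n` are *additively equivalent* if they are equivalent with every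
symbol permutation `σ i` additive, i.e. `σ i (x + y) = σ i x + σ i y`. -/
def AddCodeEquiv (F : Type*) [Add F] (n : ℕ) (A B : Set (Fin n → F)) : Prop :=
  ∃ (α : Equiv.Perm (Fin n)) (σ : Fin n → Equiv.Perm F),
    (∀ (i : Fin n) (x y : F), σ i (x + y) = σ i x + σ i y) ∧
    (fun u : Fin n → F => fun i => σ i (u (α i))) '' A = B

/-- A code `C ⊆ F^n` is *MDS* if it has a minimum distance `d` (the least Hamming
distance between distinct codewords) and `|C| = |F|^(n - d + 1)`. -/
def IsMDS (F : Type*) [Fintype F] [DecidableEq F] (n : ℕ) (C : Set (Fin n → F)) : Prop :=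
  ∃ d : ℕ,
    IsLeast {e : ℕ | ∃ u ∈ C, ∃ v ∈ C, u ≠ v ∧ hammingDist u v = e} d ∧
    Nat.card C = Fintype.card F ^ (n - d + 1)

open Finset Function
set_option linter.unusedSectionVars false
section
variable {F : Type*} [Fintype F] [DecidableEq F] [AddCommGroup F] {n : ℕ}

lemma hammingDist_reindex (α : Equiv.Perm (Fin n)) (u v : Fin n → F) :
    hammingDist (fun i => u (α i)) (fun i => v (α i)) = hammingDist u v := by
  simp only [hammingDist]
  refine Finset.card_bij (fun i _ => α i) (by simp) (fun a _ b _ h => α.injective h) ?_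
  intro b hb
  exact ⟨α.symm b, by simpa using hb, by simp⟩

lemma hammingDist_le_of_agree {u v : Fin n → F} {I : Finset (Fin n)}
    (h : ∀ i ∈ I, u i = v i) : hammingDist u v ≤ n - I.card := by
  have hsub : ({i | u i ≠ v i} : Finset (Fin n)) ⊆ Iᶜ := by
    intro i hi
    simp only [Finset.mem_filter, Finset.mem_univ, true_and] at hi
    simp only [Finset.mem_compl]
    exact fun hiI => hi (h i hiI)
  calc hammingDist u v ≤ Iᶜ.card := Finset.card_le_card hsub
    _ = n - I.card := by rw [Finset.card_compl, Fintype.card_fin]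

def CodeSep (C : Set (Fin n → F)) (k : ℕ) : Prop :=
  ∀ u ∈ C, ∀ v ∈ C, ∀ I : Finset (Fin n), k ≤ I.card → (∀ i ∈ I, u i = v i) → u = v

lemma codeSep_of_minDist {C : Set (Fin n → F)} {d k : ℕ} (hkd : n < k + d)
    (hmin : ∀ u ∈ C, ∀ v ∈ C, u ≠ v → d ≤ hammingDist u v) : CodeSep C k := by
  intro u hu v hv I hI hagree
  by_contra hne
  have h1 := hmin u hu v hv hne
  have h2 := hammingDist_le_of_agree hagree
  have h3 : I.card ≤ n := by
    simpa using Finset.card_le_card I.subset_univ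
  have h4 : 0 < hammingDist u v := hammingDist_pos.mpr hne
  omega

def projHom (I : Finset (Fin n)) : (Fin n → F) →+ (I → F) where
  toFun u := fun i => u i.1
  map_zero' := rfl
  map_add' _ _ := rfl

variable (C : AddSubgroup (Fin n → F))

def projC (I : Finset (Fin n)) : C →+ (I → F) := (projHom I).comp C.subtype

lemma projC_bijective {I : Finset (Fin n)} {k : ℕ} (hI : I.card = k)
    (hsep : CodeSep (C : Set (Fin n → F)) k)
    (hcard : Nat.card C = Fintype.card F ^ k) :
    Function.Bijective (projC C I) := by
  haveI : Fintype C := Fintype.ofFinite _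
  rw [Fintype.bijective_iff_injective_and_card]
  constructor
  · intro u v huv
    have : (u : Fin n → F) = v := by
      refine hsep u u.2 v v.2 I hI.ge ?_
      intro i hi
      exact congrFun huv ⟨i, hi⟩
    exact Subtype.ext this
  · rw [← Nat.card_eq_fintype_card, hcard, Fintype.card_fun, Fintype.card_coe, hI]

noncomputable def projEquiv {I : Finset (Fin n)} {k : ℕ} (hI : I.card = k)
    (hsep : CodeSep (C : Set (Fin n → F)) k)
    (hcard : Nat.card C = Fintype.card F ^ k) : C ≃+ (I → F) :=
  AddEquiv.ofBijective (projC C I) (projC_bijective C hI hsep hcard)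

lemma projEquiv_apply {I : Finset (Fin n)} {k : ℕ} (hI : I.card = k)
    (hsep : CodeSep (C : Set (Fin n → F)) k)
    (hcard : Nat.card C = Fintype.card F ^ k) (u : C) (i : I) :
    projEquiv C hI hsep hcard u i = (u : Fin n → F) i.1 := rfl

/-- Key lemma: in the range `2 ≤ k ≤ n-1`, every symbol permutation of a coordinatewise
equivalence between additive MDS codes (normalized to fix 0) is automatically additive. -/
lemma sigma_additive
    (C₁ C₂ : AddSubgroup (Fin n → F)) (σ : Fin n → Equiv.Perm F)
    (hσ0 : ∀ i, σ i 0 = 0)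
    (himg : (fun u : Fin n → F => fun i => σ i (u i)) '' C₁ = C₂)
    {k : ℕ} (hk2 : 2 ≤ k) (hkn : k + 1 ≤ n)
    (hsep₁ : CodeSep (C₁ : Set (Fin n → F)) k) (hc₁ : Nat.card C₁ = Fintype.card F ^ k)
    (hsep₂ : CodeSep (C₂ : Set (Fin n → F)) k) (hc₂ : Nat.card C₂ = Fintype.card F ^ k)
    (j : Fin n) (s t : F) : σ j (s + t) = σ j s + σ j t := by
  -- choose an information set of size k avoiding j
  obtain ⟨I, hIsub, hIcard⟩ := Finset.exists_subset_card_eq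
    (s := Finset.univ.erase j) (n := k)
    (by rw [Finset.card_erase_of_mem (Finset.mem_univ j), Finset.card_univ, Fintype.card_fin]
        omega)
  have hjI : j ∉ I := fun hj => (Finset.mem_erase.mp (hIsub hj)).1 rfl
  obtain ⟨i', hi'I, m', hm'I, him'⟩ := Finset.one_lt_card.mp (by omega : 1 < I.card)
  set iI : ↥I := ⟨i', hi'I⟩ with hiIdef
  set mI : ↥I := ⟨m', hm'I⟩ with hmIdef
  have him : iI ≠ mI := fun hh => him' (congrArg Subtype.val hh)
  set e₁ := projEquiv C₁ hIcard hsep₁ hc₁ with he₁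
  set e₂ := projEquiv C₂ hIcard hsep₂ hc₂ with he₂
  have hmemψ : ∀ u : C₁, (fun i => σ i ((u : Fin n → F) i)) ∈ C₂ := by
    intro u
    have : (fun i => σ i ((u : Fin n → F) i)) ∈
        ((fun u : Fin n → F => fun i => σ i (u i)) '' C₁) := ⟨u, u.2, rfl⟩
    rwa [himg] at this
  -- the key identity
  have key : ∀ a c : F,
      (fun i => σ i ((e₁.symm (Pi.single iI a + Pi.single mI c) : Fin n → F) i)) =
      (e₂.symm (Pi.single iI (σ i' a) + Pi.single mI (σ m' c)) : Fin n → F) := by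
    intro a c
    set u : C₁ := e₁.symm (Pi.single iI a + Pi.single mI c) with hu
    set v : C₂ := e₂.symm (Pi.single iI (σ i' a) + Pi.single mI (σ m' c)) with hv
    have hw : (fun i => σ i ((u : Fin n → F) i)) ∈ C₂ := hmemψ u
    refine hsep₂ _ hw _ v.2 I hIcard.ge ?_
    intro i hi
    have hu' : (u : Fin n → F) i = (Pi.single iI a + Pi.single mI c : ↥I → F) ⟨i, hi⟩ := by
      have := congrFun (e₁.apply_symm_apply (Pi.single iI a + Pi.single mI c)) ⟨i, hi⟩
      rw [← this]; rfl
    have hv' : (v : Fin n → F) i =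
        (Pi.single iI (σ i' a) + Pi.single mI (σ m' c) : ↥I → F) ⟨i, hi⟩ := by
      have := congrFun (e₂.apply_symm_apply
        (Pi.single iI (σ i' a) + Pi.single mI (σ m' c))) ⟨i, hi⟩
      rw [← this]; rfl
    rw [hu', hv']
    by_cases h1 : (⟨i, hi⟩ : ↥I) = iI
    · have hnm : ¬((⟨i, hi⟩ : ↥I) = mI) := by rw [h1]; exact him
      have hii : i = i' := congrArg Subtype.val h1
      subst hii
      simp only [Pi.add_apply, Pi.single_apply, if_pos h1, if_neg hnm, add_zero, if_true]
    · by_cases h2 : (⟨i, hi⟩ : ↥I) = mI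
      · have hmm : i = m' := congrArg Subtype.val h2
        subst hmm
        simp only [Pi.add_apply, Pi.single_apply, if_pos h2, if_neg h1, zero_add, if_true]
      · simp only [Pi.add_apply, Pi.single_apply, if_neg h1, if_neg h2, add_zero, hσ0]
  -- coordinate j components
  set xa : F → F := fun a => (e₁.symm (Pi.single iI a) : Fin n → F) j with hxa
  set yc : F → F := fun c => (e₁.symm (Pi.single mI c) : Fin n → F) j with hyc
  set Xa : F → F := fun a => (e₂.symm (Pi.single iI (σ i' a)) : Fin n → F) j with hXa
  set Yc : F → F := fun c => (e₂.symm (Pi.single mI (σ m' c)) : Fin n → F) j with hYc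
  have E : ∀ a c : F, σ j (xa a + yc c) = Xa a + Yc c := by
    intro a c
    have h := congrFun (key a c) j
    have hL : (e₁.symm (Pi.single iI a + Pi.single mI c) : Fin n → F) j = xa a + yc c := by
      rw [map_add]; rfl
    have hR : (e₂.symm (Pi.single iI (σ i' a) + Pi.single mI (σ m' c)) : Fin n → F) j
        = Xa a + Yc c := by
      rw [map_add]; rfl
    rw [hL] at h
    rw [hR] at h
    exact h
  -- injectivity (hence surjectivity) of xa and yc
  have hinj : ∀ (w : ↥I) (b b' : F),
      (e₁.symm (Pi.single w b) : Fin n → F) j = (e₁.symm (Pi.single w b') : Fin n → F) j →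
      b = b' := by
    intro w b b' hbb
    set u := e₁.symm (Pi.single w b) with hudef
    set v := e₁.symm (Pi.single w b') with hvdef
    have huv : (u : Fin n → F) = (v : Fin n → F) := by
      refine hsep₁ _ u.2 _ v.2 (insert j (I.erase w.1)) ?_ ?_
      · rw [Finset.card_insert_of_notMem (fun hh => hjI (Finset.mem_of_mem_erase hh)),
          Finset.card_erase_of_mem w.2, hIcard]
        omega
      · intro i hi
        rcases Finset.mem_insert.mp hi with rfl | hi'
        · exact hbb
        · have hiI2 : i ∈ I := Finset.mem_of_mem_erase hi'
          have hne : (⟨i, hiI2⟩ : ↥I) ≠ w :=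
            fun hh => (Finset.mem_erase.mp hi').1 (congrArg Subtype.val hh)
          have h1 : (u : Fin n → F) i = (Pi.single w b : ↥I → F) ⟨i, hiI2⟩ := by
            have := congrFun (e₁.apply_symm_apply (Pi.single w b)) ⟨i, hiI2⟩
            rw [← this]; rfl
          have h2 : (v : Fin n → F) i = (Pi.single w b' : ↥I → F) ⟨i, hiI2⟩ := by
            have := congrFun (e₁.apply_symm_apply (Pi.single w b')) ⟨i, hiI2⟩
            rw [← this]; rfl
          rw [h1, h2, Pi.single_apply, Pi.single_apply, if_neg hne, if_neg hne]
    have : (Pi.single w b : ↥I → F) = Pi.single w b' := by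
      have := e₁.symm.injective (Subtype.ext huv : u = v)
      exact this
    have := congrFun this w
    rwa [Pi.single_eq_same, Pi.single_eq_same] at this
  have hxs : Function.Surjective xa :=
    Finite.injective_iff_surjective.mp (fun a b hab => hinj iI a b hab)
  have hys : Function.Surjective yc :=
    Finite.injective_iff_surjective.mp (fun a b hab => hinj mI a b hab)
  obtain ⟨a, ha⟩ := hxs s
  obtain ⟨c, hc⟩ := hys t
  have hx0 : xa 0 = 0 := by
    rw [hxa]; simp only [Pi.single_zero, map_zero]; rfl
  have hy0 : yc 0 = 0 := by
    rw [hyc]; simp only [Pi.single_zero, map_zero]; rfl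
  have hX0 : Xa 0 = 0 := by
    rw [hXa]; simp only [hσ0, Pi.single_zero, map_zero]; rfl
  have hY0 : Yc 0 = 0 := by
    rw [hYc]; simp only [hσ0, Pi.single_zero, map_zero]; rfl
  have e1 := E a 0
  rw [hy0, hY0, add_zero, add_zero, ha] at e1
  have e2 := E 0 c
  rw [hx0, hX0, zero_add, zero_add, hc] at e2
  have e3 := E a c
  rw [ha, hc] at e3
  rw [e3, ← e1, ← e2]

/-- The singleton-coordinate evaluation equivalence. -/
def evSingle (j : Fin n) : (({j} : Finset (Fin n)) → F) ≃+ F where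
  toFun s := s ⟨j, Finset.mem_singleton_self j⟩
  invFun a := fun _ => a
  left_inv s := by
    funext t
    have ht : t = ⟨j, Finset.mem_singleton_self j⟩ :=
      Subtype.ext (Finset.mem_singleton.mp t.2)
    rw [ht]
  right_inv a := rfl
  map_add' _ _ := rfl

/-- Core lemma: a coordinatewise equivalence between additive MDS codes can be replaced
by an additive coordinatewise equivalence. -/
lemma core_exists_additive (C₁ C₂ : AddSubgroup (Fin n → F)) (d : ℕ)
    (hd1 : 1 ≤ d) (hdn : d ≤ n)
    (hmin₁ : ∀ u ∈ (C₁ : Set (Fin n → F)), ∀ v ∈ (C₁ : Set (Fin n → F)),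
      u ≠ v → d ≤ hammingDist u v)
    (hmin₂ : ∀ u ∈ (C₂ : Set (Fin n → F)), ∀ v ∈ (C₂ : Set (Fin n → F)),
      u ≠ v → d ≤ hammingDist u v)
    (hc₁ : Nat.card C₁ = Fintype.card F ^ (n - d + 1))
    (hc₂ : Nat.card C₂ = Fintype.card F ^ (n - d + 1))
    (σ : Fin n → Equiv.Perm F)
    (himg : (fun u : Fin n → F => fun i => σ i (u i)) '' C₁ = C₂) :
    ∃ τ : Fin n → Equiv.Perm F, (∀ (i : Fin n) (x y : F), τ i (x + y) = τ i x + τ i y) ∧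
      (fun u : Fin n → F => fun i => τ i (u i)) '' C₁ = C₂ := by
  classical
  by_cases hd1' : d = 1
  -- trivial case : both codes are everything
  · subst hd1'
    have hcard1 : Nat.card C₁ = Nat.card (Fin n → F) := by
      rw [hc₁, Nat.card_eq_fintype_card, Fintype.card_fun, Fintype.card_fin]
      congr 1
      omega
    have hcard2 : Nat.card C₂ = Nat.card (Fin n → F) := by
      rw [hc₂, Nat.card_eq_fintype_card, Fintype.card_fun, Fintype.card_fin]
      congr 1
      omega
    have h1 : C₁ = ⊤ := AddSubgroup.eq_top_of_card_eq _ hcard1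
    have h2 : C₂ = ⊤ := AddSubgroup.eq_top_of_card_eq _ hcard2
    refine ⟨fun _ => 1, fun _ _ _ => rfl, ?_⟩
    have hid : (fun u : Fin n → F => fun i => (1 : Equiv.Perm F) (u i)) = id := rfl
    rw [hid, Set.image_id, h1, h2]
  -- normalize the permutations so that they fix 0
  · set c : Fin n → F := fun i => σ i 0 with hcdef
    have hcC₂ : c ∈ C₂ := by
      rw [← SetLike.mem_coe, ← himg]
      exact ⟨0, C₁.zero_mem, rfl⟩
    set σ' : Fin n → Equiv.Perm F := fun i => (σ i).trans (Equiv.subRight (c i)) with hσ'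
    have hσ'apply : ∀ (i : Fin n) (x : F), σ' i x = σ i x - c i := fun i x => rfl
    have hσ'0 : ∀ i, σ' i 0 = 0 := fun i => sub_self _
    have himg' : (fun u : Fin n → F => fun i => σ' i (u i)) '' C₁ = C₂ := by
      ext x
      simp only [Set.mem_image, SetLike.mem_coe]
      constructor
      · rintro ⟨u, hu, rfl⟩
        have hmem : (fun i => σ i (u i)) ∈ C₂ := by
          rw [← SetLike.mem_coe, ← himg]
          exact ⟨u, hu, rfl⟩
        have heq : (fun i => σ' i (u i)) = (fun i => σ i (u i)) - c := by
          funext i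
          simp [hσ'apply]
        rw [heq]
        exact C₂.sub_mem hmem hcC₂
      · intro hx
        have hxc : x + c ∈ (((fun u : Fin n → F => fun i => σ i (u i)) '' C₁) : Set (Fin n → F)) := by
          rw [himg]
          exact SetLike.mem_coe.mpr (C₂.add_mem hx hcC₂)
        obtain ⟨u, hu, hux⟩ := hxc
        refine ⟨u, hu, ?_⟩
        funext i
        have := congrFun hux i
        simp only at this
        rw [hσ'apply, this]
        simp
    by_cases hdn' : d = n
    -- d = n : both codes are one-dimensional, construct directly
    · have hn1 : 1 ≤ n := hdn' ▸ hd1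
      have hk1 : n - d + 1 = 1 := by omega
      have hsep₁ : CodeSep (C₁ : Set (Fin n → F)) 1 :=
        codeSep_of_minDist (by omega) hmin₁
      have hsep₂ : CodeSep (C₂ : Set (Fin n → F)) 1 :=
        codeSep_of_minDist (by omega) hmin₂
      have hc₁' : Nat.card C₁ = Fintype.card F ^ 1 := by rw [hc₁, hk1]
      have hc₂' : Nat.card C₂ = Fintype.card F ^ 1 := by rw [hc₂, hk1]
      set E₁ : ∀ _ : Fin n, C₁ ≃+ F := fun j =>
        (projEquiv C₁ (Finset.card_singleton j) hsep₁ hc₁').trans (evSingle j) with hE₁def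
      set E₂ : ∀ _ : Fin n, C₂ ≃+ F := fun j =>
        (projEquiv C₂ (Finset.card_singleton j) hsep₂ hc₂').trans (evSingle j) with hE₂def
      have hE₁ : ∀ (j : Fin n) (u : C₁), E₁ j u = (u : Fin n → F) j := fun j u => rfl
      have hE₂ : ∀ (j : Fin n) (u : C₂), E₂ j u = (u : Fin n → F) j := fun j u => rfl
      set j₀ : Fin n := ⟨0, by omega⟩ with hj₀
      set θ : C₁ ≃+ C₂ := (E₁ j₀).trans (E₂ j₀).symm with hθ
      set τ : Fin n → Equiv.Perm F :=
        fun j => ((E₁ j).symm.trans (θ.trans (E₂ j))).toEquiv with hτ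
      have key : ∀ u : C₁, (fun i => τ i ((u : Fin n → F) i)) = ((θ u : C₂) : Fin n → F) := by
        intro u
        funext i
        have h1 : (E₁ i).symm ((u : Fin n → F) i) = u := by
          rw [← hE₁ i u, (E₁ i).symm_apply_apply]
        show E₂ i (θ ((E₁ i).symm ((u : Fin n → F) i))) = _
        rw [h1, hE₂]
      refine ⟨τ, fun i x y => map_add ((E₁ i).symm.trans (θ.trans (E₂ i))) x y, ?_⟩
      ext x
      simp only [Set.mem_image, SetLike.mem_coe]
      constructor
      · rintro ⟨u, hu, rfl⟩
        rw [key ⟨u, hu⟩]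
        exact (θ ⟨u, hu⟩).2
      · intro hx
        refine ⟨(θ.symm ⟨x, hx⟩ : C₁), (θ.symm ⟨x, hx⟩).2, ?_⟩
        rw [key (θ.symm ⟨x, hx⟩), θ.apply_symm_apply]
    -- main case : 2 ≤ d ≤ n - 1, the normalized permutations are additive
    · set k : ℕ := n - d + 1 with hk
      have hk2 : 2 ≤ k := by omega
      have hkn : k + 1 ≤ n := by omega
      have hsep₁ : CodeSep (C₁ : Set (Fin n → F)) k :=
        codeSep_of_minDist (by omega) hmin₁
      have hsep₂ : CodeSep (C₂ : Set (Fin n → F)) k :=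
        codeSep_of_minDist (by omega) hmin₂
      exact ⟨σ', fun i x y =>
        sigma_additive C₁ C₂ σ' hσ'0 himg' hk2 hkn hsep₁ hc₁ hsep₂ hc₂ i x y, himg'⟩

/-- Reindexing coordinates by a permutation, as an additive equivalence. -/
def reindexEquiv (α : Equiv.Perm (Fin n)) : (Fin n → F) ≃+ (Fin n → F) where
  toFun u := fun i => u (α i)
  invFun u := fun i => u (α.symm i)
  left_inv u := funext fun i => by simp
  right_inv u := funext fun i => by simp
  map_add' _ _ := rfl

end

def CodeEquiv' (F : Type*) (n : ℕ) (A B : Set (Fin n → F)) : Prop :=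
  ∃ (α : Equiv.Perm (Fin n)) (σ : Fin n → Equiv.Perm F),
    (fun u : Fin n → F => fun i => σ i (u (α i))) '' A = B

theorem main_test
    (n : ℕ)
    (F : Type*) [AddCommGroup F] [Fintype F] [DecidableEq F]
    (C₁ C₂ : AddSubgroup (Fin n → F))
    (h₁ : ∃ d : ℕ,
      IsLeast {e : ℕ | ∃ u ∈ (C₁ : Set (Fin n → F)), ∃ v ∈ (C₁ : Set (Fin n → F)),
        u ≠ v ∧ hammingDist u v = e} d ∧
      Nat.card (C₁ : Set (Fin n → F)) = Fintype.card F ^ (n - d + 1))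
    (h₂ : ∃ d : ℕ,
      IsLeast {e : ℕ | ∃ u ∈ (C₂ : Set (Fin n → F)), ∃ v ∈ (C₂ : Set (Fin n → F)),
        u ≠ v ∧ hammingDist u v = e} d ∧
      Nat.card (C₂ : Set (Fin n → F)) = Fintype.card F ^ (n - d + 1))
    (hequiv : CodeEquiv' F n (C₁ : Set (Fin n → F)) (C₂ : Set (Fin n → F))) :
    ∃ (α : Equiv.Perm (Fin n)) (σ : Fin n → Equiv.Perm F),
      (∀ (i : Fin n) (x y : F), σ i (x + y) = σ i x + σ i y) ∧
      (fun u : Fin n → F => fun i => σ i (u (α i))) '' C₁ = C₂ := by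
  classical
  obtain ⟨α, σ, him⟩ := hequiv
  obtain ⟨d₁, ⟨hd₁mem, hd₁lb⟩, hc₁⟩ := h₁
  obtain ⟨d₂, ⟨hd₂mem, hd₂lb⟩, hc₂⟩ := h₂
  -- the full map is distance preserving
  have hdist : ∀ u v : Fin n → F,
      hammingDist (fun i => σ i (u (α i))) (fun i => σ i (v (α i))) = hammingDist u v := by
    intro u v
    have h1 : hammingDist (fun i => σ i (u (α i))) (fun i => σ i (v (α i)))
        = hammingDist (fun i => u (α i)) (fun i => v (α i)) :=
      hammingDist_comp (fun i => ⇑(σ i)) (fun i => (σ i).injective)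
    rw [h1, hammingDist_reindex]
  -- the distance sets coincide, so d₂ = d₁
  have hsets : {e : ℕ | ∃ u ∈ (C₂ : Set (Fin n → F)), ∃ v ∈ (C₂ : Set (Fin n → F)),
        u ≠ v ∧ hammingDist u v = e}
      = {e : ℕ | ∃ u ∈ (C₁ : Set (Fin n → F)), ∃ v ∈ (C₁ : Set (Fin n → F)),
        u ≠ v ∧ hammingDist u v = e} := by
    ext e
    constructor
    · rintro ⟨u, hu, v, hv, hne, rfl⟩
      rw [← him] at hu hv
      obtain ⟨u₀, hu₀, rfl⟩ := hu
      obtain ⟨v₀, hv₀, rfl⟩ := hv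
      exact ⟨u₀, hu₀, v₀, hv₀, fun hh => hne (by rw [hh]), (hdist u₀ v₀).symm⟩
    · rintro ⟨u, hu, v, hv, hne, rfl⟩
      refine ⟨_, ?_, _, ?_, ?_, hdist u v⟩
      · rw [← him]; exact ⟨u, hu, rfl⟩
      · rw [← him]; exact ⟨v, hv, rfl⟩
      · intro hh
        apply hne
        have : hammingDist u v = 0 := by
          rw [← hdist u v, hh, hammingDist_self]
        exact hammingDist_eq_zero.mp this
  have hd21 : d₂ = d₁ := (IsLeast.unique ⟨hsets ▸ hd₂mem, fun e he => hd₂lb (hsets ▸ he)⟩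
    ⟨hd₁mem, hd₁lb⟩)
  -- basic facts about d₁
  obtain ⟨u₀, hu₀, v₀, hv₀, hne₀, he₀⟩ := hd₁mem
  have hd1 : 1 ≤ d₁ := he₀ ▸ hammingDist_pos.mpr hne₀
  have hdn : d₁ ≤ n := by
    rw [← he₀]
    exact hammingDist_le_card_fintype.trans_eq (Fintype.card_fin n)
  have hmin₁ : ∀ u ∈ (C₁ : Set (Fin n → F)), ∀ v ∈ (C₁ : Set (Fin n → F)),
      u ≠ v → d₁ ≤ hammingDist u v := fun u hu v hv hne => hd₁lb ⟨u, hu, v, hv, hne, rfl⟩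
  have hmin₂ : ∀ u ∈ (C₂ : Set (Fin n → F)), ∀ v ∈ (C₂ : Set (Fin n → F)),
      u ≠ v → d₁ ≤ hammingDist u v := fun u hu v hv hne =>
    hd21 ▸ hd₂lb ⟨u, hu, v, hv, hne, rfl⟩
  -- reindex C₁
  set R := reindexEquiv (F := F) α with hR
  set C₁' : AddSubgroup (Fin n → F) := AddSubgroup.map R.toAddMonoidHom C₁ with hC₁'
  have hset : (C₁' : Set (Fin n → F)) = ⇑R '' (C₁ : Set (Fin n → F)) := by
    rw [hC₁', AddSubgroup.coe_map]
    rfl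
  have hmin₁' : ∀ u ∈ (C₁' : Set (Fin n → F)), ∀ v ∈ (C₁' : Set (Fin n → F)),
      u ≠ v → d₁ ≤ hammingDist u v := by
    intro u hu v hv hne
    rw [hset] at hu hv
    obtain ⟨u₀, hu₀, rfl⟩ := hu
    obtain ⟨v₀, hv₀, rfl⟩ := hv
    have : hammingDist (R u₀) (R v₀) = hammingDist u₀ v₀ := hammingDist_reindex α u₀ v₀
    rw [this]
    exact hmin₁ u₀ hu₀ v₀ hv₀ (fun hh => hne (by rw [hh]))
  have hc₁' : Nat.card C₁' = Fintype.card F ^ (n - d₁ + 1) := by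
    have h1 : Nat.card C₁' = Nat.card (⇑R '' (C₁ : Set (Fin n → F))) :=
      Nat.card_congr (Equiv.setCongr hset)
    rw [h1, Nat.card_image_of_injective R.injective, hc₁]
  -- the reindexed equivalence is coordinatewise
  have himg0 : (fun u : Fin n → F => fun i => σ i (u i)) '' (C₁' : Set (Fin n → F)) = C₂ := by
    rw [hset, ← Set.image_comp, ← him]
    rfl
  obtain ⟨τ, hτadd, hτimg⟩ := core_exists_additive C₁' C₂ d₁ hd1 hdn hmin₁' hmin₂
    hc₁' (hd21 ▸ hc₂) σ himg0
  refine ⟨α, τ, hτadd, ?_⟩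
  have : (fun u : Fin n → F => fun i => τ i (u (α i))) '' (C₁ : Set (Fin n → F))
      = (fun u : Fin n → F => fun i => τ i (u i)) '' (⇑R '' (C₁ : Set (Fin n → F))) := by
    rw [← Set.image_comp]
    rfl
  rw [this, ← hset, hτimg]


/-- Two additive MDS codes of length `n` over `F_q`, `q = p^h` with `p` prime, are
equivalent if and only if they are additively equivalent. -/
theorem additiveMDS_equiv_iff_addEquiv
    (p h n : ℕ) [Fact p.Prime]
    (F : Type*) [Field F] [Fintype F] [DecidableEq F]
    (hcard : Fintype.card F = p ^ h)
    (C₁ C₂ : AddSubgroup (Fin n → F))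
    (h₁ : IsMDS F n (C₁ : Set (Fin n → F))) (h₂ : IsMDS F n (C₂ : Set (Fin n → F))) :
    CodeEquiv F n (C₁ : Set (Fin n → F)) (C₂ : Set (Fin n → F)) ↔
      AddCodeEquiv F n (C₁ : Set (Fin n → F)) (C₂ : Set (Fin n → F)) := by
  constructor
  · intro hequiv
    exact main_test n F C₁ C₂ h₁ h₂ hequiv
  · rintro ⟨α, σ, _, him⟩
    exact ⟨α, σ, him⟩
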